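/- Let T be a finite cubic Halin tree (a tree with at least 2 vertices in which every vertex has degree 1 or degree 3), and let G be the graph obtained from T by isomorphic leaf matching. Then G is a minimal bipartite matching covered graph satisfying |V2| = n/2 + 2, i.e. 2·|V2| = n + 4, where n is the number of vertices and V2 the set of degree-2 vertices of G. -/

import Mathlib

/-!
Write `G` for the leaf-matching graph of the tree `T`. A matching of `T` whose exposed vertices
are leaves, used in both copies and completed by the edges joining the exposed leaves to their
twins, is a perfect matching of `G`. Deleting a leaf other than the ends of a given edge and
inducting shows that every edge of `T` lies in such a matching, and that every leaf is exposed in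
one; hence `G` is matching covered.

For minimality: if `ab` is an edge of `T` and `W` is the side of `a` in `T - ab`, then the two
copies of `W` form an even set whose only outgoing edges are the two copies of `ab`, so by parity
a perfect matching uses both or neither of them. Deleting a leaf edge `inl u inr u` instead makes
`inl u` pendant, which rules out every other edge at its neighbour.

`G` is bipartite because a 2-colouring of `T`, reversed on the second copy, colours it. Finally the
handshake lemma shows that a tree on `n` vertices with all degrees `1` or `3` has `n / 2 + 1`
leaves, and the degree-2 vertices of `G` are exactly the two copies of the leaves.
-/

open SimpleGraph

/-- The degree of a vertex `v` in a graph `G`: the number of neighbours of `v`. -/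
noncomputable def degN {V : Type*} (G : SimpleGraph V) (v : V) : ℕ :=
  (G.neighborSet v).ncard

/-- A finite simple graph is matching covered if it is connected, has at least 4 vertices,
and every edge lies in some perfect matching. -/
def MatchingCovered {V : Type*} [Fintype V] (G : SimpleGraph V) : Prop :=
  G.Connected ∧ 4 ≤ Fintype.card V ∧
    ∀ e ∈ G.edgeSet, ∃ M : G.Subgraph, M.IsPerfectMatching ∧ e ∈ M.edgeSet

/-- A matching covered graph is minimal if deleting any edge destroys the property. -/
def MinimalMatchingCovered {V : Type*} [Fintype V] (G : SimpleGraph V) : Prop :=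
  MatchingCovered G ∧ ∀ e ∈ G.edgeSet, ¬ MatchingCovered (G.deleteEdges {e})

/-- The graph obtained from a tree `T` by isomorphic leaf matching: two disjoint copies of `T`
(the `inl` copy and the `inr` copy), together with an edge joining the two copies of each
leaf (degree-1 vertex) of `T`. -/
def leafMatching {V : Type*} (T : SimpleGraph V) : SimpleGraph (V ⊕ V) where
  Adj x y :=
    match x, y with
    | Sum.inl u, Sum.inl v => T.Adj u v
    | Sum.inr u, Sum.inr v => T.Adj u v
    | Sum.inl u, Sum.inr v => u = v ∧ degN T u = 1
    | Sum.inr u, Sum.inl v => u = v ∧ degN T v = 1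
  symm := by
    refine ⟨?_⟩
    rintro (u | u) (v | v) h
    · exact h.symm
    · exact ⟨h.1.symm, h.2⟩
    · exact ⟨h.1.symm, h.2⟩
    · exact h.symm
  loopless := by
    refine ⟨?_⟩
    rintro (u | u) h
    · exact T.loopless.irrefl u h
    · exact T.loopless.irrefl u h

open Finset

section Degree

variable {V W : Type*} {G : SimpleGraph V}

lemma degN_eq_degree (v : V) [Fintype (G.neighborSet v)] :
    degN G v = G.degree v := by
  rw [degN, ← Nat.card_coe_set_eq, Nat.card_eq_fintype_card, card_neighborSet_eq_degree]

lemma SimpleGraph.Iso.degN_apply {H : SimpleGraph W} (e : G ≃g H) (v : V) :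
    degN H (e v) = degN G v := by
  simp only [degN, ← Nat.card_coe_set_eq]
  exact (Nat.card_congr (e.mapNeighborSet v)).symm

lemma neighborSet_eq_singleton_of_degN_eq_one {v w : V} (h : degN G v = 1) (hvw : G.Adj v w) :
    G.neighborSet v = {w} := by
  obtain ⟨a, ha⟩ := Set.ncard_eq_one.mp h
  have hw : w ∈ G.neighborSet v := hvw
  rw [ha, Set.mem_singleton_iff] at hw
  rwa [hw]

lemma adj_of_neighborSet_eq_singleton {v w : V} (h : G.neighborSet v = {w}) : G.Adj v w := by
  rw [← mem_neighborSet, h]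
  rfl

lemma exists_adj_ne_of_degN_ne_one {v u : V} (h : degN G v ≠ 1) (hvu : G.Adj v u) :
    ∃ w, G.Adj v w ∧ w ≠ u := by
  by_contra! H
  refine h (Set.ncard_eq_one.mpr ⟨u, Set.ext fun w => ⟨H w, ?_⟩⟩)
  rintro rfl
  exact hvu

lemma degN_induce_of_neighborSet_subset {s : Set V} {v : s} (h : G.neighborSet v ⊆ s) :
    degN (G.induce s) v = degN G v := by
  have : Subtype.val '' (G.induce s).neighborSet v = G.neighborSet v := by
    ext w
    exact ⟨fun ⟨w', hw', hw⟩ => hw ▸ hw', fun hw => ⟨⟨w, h hw⟩, hw, rfl⟩⟩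
  rw [degN, degN, ← this, Set.ncard_image_of_injective _ Subtype.val_injective]

end Degree

namespace SimpleGraph

variable {V : Type*} {T : SimpleGraph V}

lemma Preconnected.eq_or_eq_of_neighborSet_eq_singleton (hT : T.Preconnected) {u v : V}
    (hu : T.neighborSet u = {v}) (hv : T.neighborSet v = {u}) (x : V) : x = u ∨ x = v := by
  obtain ⟨p⟩ := hT u x
  suffices ∀ {a b : V}, T.Walk a b → a = u ∨ a = v → b = u ∨ b = v from this p (.inl rfl)
  intro a b p
  induction p with
  | nil => exact id
  | @cons a c b hac _ ih =>
    have hc : c ∈ T.neighborSet a := hac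
    rintro (rfl | rfl)
    · exact ih (.inr (by rwa [hu] at hc))
    · exact ih (.inl (by rwa [hv] at hc))

lemma IsTree.exists_ne_and_degN_eq_one [Finite V] [Nontrivial V] (hT : T.IsTree) :
    ∃ a b, a ≠ b ∧ degN T a = 1 ∧ degN T b = 1 := by
  classical
  have := Fintype.ofFinite V
  simpa only [degN_eq_degree] using hT.exists_ne_and_degree_eq_one

lemma IsTree.exists_degN_eq_one_ne_ne [Finite V] (hT : T.IsTree) (hV : 2 < Nat.card V)
    {u v : V} (huv : T.Adj u v) : ∃ ℓ, degN T ℓ = 1 ∧ ℓ ≠ u ∧ ℓ ≠ v := by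
  have : Nontrivial V := Finite.one_lt_card_iff_nontrivial.mp (by omega)
  obtain ⟨a, b, hab, ha, hb⟩ := hT.exists_ne_and_degN_eq_one
  by_contra! h
  have hleaf : ∀ ℓ, degN T ℓ = 1 → ℓ = u ∨ ℓ = v := fun ℓ hℓ => or_iff_not_imp_left.mpr (h ℓ hℓ)
  have hu : degN T u = 1 ∧ degN T v = 1 := by
    rcases hleaf a ha with rfl | rfl <;> rcases hleaf b hb with rfl | rfl <;> tauto
  have hV2 := hT.connected.preconnected.eq_or_eq_of_neighborSet_eq_singleton
    (neighborSet_eq_singleton_of_degN_eq_one hu.1 huv)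
    (neighborSet_eq_singleton_of_degN_eq_one hu.2 huv.symm)
  have : (Set.univ : Set V) = {u, v} := Set.eq_univ_of_forall hV2 |>.symm
  rw [← Set.ncard_univ, this, Set.ncard_pair huv.ne] at hV
  omega

lemma IsTree.induce_compl_singleton (hT : T.IsTree) {ℓ p : V} (hℓ : T.neighborSet ℓ = {p}) :
    (T.induce {ℓ}ᶜ).IsTree := by
  have hp : p ≠ ℓ := (adj_of_neighborSet_eq_singleton hℓ).ne'
  refine ⟨(connected_iff _).mpr ⟨?_, ⟨p, hp⟩⟩, hT.isAcyclic.induce _⟩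
  refine hT.connected.preconnected.induce_of_degree_eq_one fun v hv => ?_
  rw [Set.notMem_compl_iff, Set.mem_singleton_iff] at hv
  rw [hv, hℓ]
  exact Set.subsingleton_singleton

lemma IsTree.sum_degN [Fintype V] (hT : T.IsTree) : ∑ v, degN T v + 2 = 2 * Fintype.card V := by
  classical
  simp only [degN_eq_degree, sum_degrees_eq_twice_card_edges, ← hT.card_edgeFinset]
  ring

lemma IsTree.two_mul_card_leaves [Fintype V] (hT : T.IsTree)
    (hdeg : ∀ v, degN T v = 1 ∨ degN T v = 3) :
    2 * #{v | degN T v = 1} = Fintype.card V + 2 := by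
  have h3 : ∑ v, (degN T v + if degN T v = 1 then 2 else 0) = ∑ _v : V, 3 :=
    sum_congr rfl fun v _ => by rcases hdeg v with h | h <;> simp [h]
  rw [sum_add_distrib, ← sum_filter, sum_const, sum_const, smul_eq_mul, smul_eq_mul,
    card_univ] at h3
  have := hT.sum_degN
  omega

lemma IsBridge.eq_and_eq_of_adj {a b x y : V} (h : T.IsBridge s(a, b))
    (hx : (T.deleteEdges {s(a, b)}).Reachable a x) (hy : ¬ (T.deleteEdges {s(a, b)}).Reachable a y)
    (hxy : T.Adj x y) : x = a ∧ y = b := by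
  by_cases he : s(x, y) = s(a, b)
  · rcases Sym2.eq_iff.mp he with hxy' | ⟨rfl, rfl⟩
    · exact hxy'
    · exact absurd hx h
  · exact absurd (hx.trans (Adj.reachable (deleteEdges_adj.mpr ⟨hxy, he⟩))) hy

end SimpleGraph

lemma Function.Involutive.swap_comp {α : Type*} [DecidableEq α] {g : α → α}
    (hg : Function.Involutive g) {a b : α} (ha : g a = a) (hb : g b = b) :
    Function.Involutive (Equiv.swap a b ∘ g) := by
  have hcomm : ∀ x, g (Equiv.swap a b x) = Equiv.swap a b (g x) := by
    intro x
    rcases eq_or_ne x a with rfl | hxa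
    · simp [ha, hb]
    rcases eq_or_ne x b with rfl | hxb
    · simp [ha, hb]
    have hgxa : g x ≠ a := fun h => hxa (hg.injective (h.trans ha.symm))
    have hgxb : g x ≠ b := fun h => hxb (hg.injective (h.trans hb.symm))
    rw [Equiv.swap_apply_of_ne_of_ne hxa hxb, Equiv.swap_apply_of_ne_of_ne hgxa hgxb]
  intro x
  simp only [Function.comp_apply, hcomm, hg x, Equiv.swap_apply_self]

section ExposedMatching

variable {V : Type*} {T : SimpleGraph V}

/-- A matching of `T` encoded as an involution: `f` swaps the two ends of each matching edge
and fixes the unmatched (exposed) vertices, which are required to be leaves. -/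
def IsLeafExposedMatching (T : SimpleGraph V) (f : V → V) : Prop :=
  Function.Involutive f ∧ (∀ x, f x ≠ x → T.Adj x (f x)) ∧ ∀ x, f x = x → degN T x = 1

lemma IsLeafExposedMatching.exists_extend_compl_singleton {ℓ p : V}
    (hℓ : T.neighborSet ℓ = {p})
    {f : ({ℓ}ᶜ : Set V) → ({ℓ}ᶜ : Set V)} (hf : IsLeafExposedMatching (T.induce {ℓ}ᶜ) f) :
    ∃ g : V → V, Function.Involutive g ∧ (∀ x, g x ≠ x → T.Adj x (g x)) ∧
      (∀ x, g x = x → x ≠ p → degN T x = 1) ∧ g ℓ = ℓ ∧ ∀ x : ({ℓ}ᶜ : Set V), g x = f x := by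
  classical
  obtain ⟨hinv, hadj, hfix⟩ := hf
  let g : V → V := fun x => if hx : x = ℓ then ℓ else f ⟨x, hx⟩
  have hgℓ : g ℓ = ℓ := dif_pos rfl
  have hg : ∀ x : ({ℓ}ᶜ : Set V), g x = f x := fun x => dif_neg x.2
  refine ⟨g, fun x => ?_, fun x hx => ?_, fun x hx hxp => ?_, hgℓ, hg⟩
  · by_cases hx : x = ℓ
    · rw [hx, hgℓ, hgℓ]
    · rw [hg ⟨x, hx⟩, hg, hinv]
  · have hxℓ : x ≠ ℓ := by rintro rfl; exact hx hgℓ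
    rw [hg ⟨x, hxℓ⟩] at hx ⊢
    exact hadj ⟨x, hxℓ⟩ fun h => hx (congrArg Subtype.val h)
  · by_cases hxℓ : x = ℓ
    · rw [hxℓ, degN, hℓ, Set.ncard_singleton]
    rw [hg ⟨x, hxℓ⟩] at hx
    rw [← degN_induce_of_neighborSet_subset (s := {ℓ}ᶜ) (v := ⟨x, hxℓ⟩), hfix _ (Subtype.ext hx)]
    rintro y hy rfl
    exact hxp (by rw [← Set.mem_singleton_iff, ← hℓ]; exact hy.symm)

lemma exists_isLeafExposedMatching_of_pendant [DecidableEq V] {ℓ p : V}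
    (hℓ : T.neighborSet ℓ = {p}) {g : V → V} (hg : Function.Involutive g)
    (hadj : ∀ x, g x ≠ x → T.Adj x (g x)) (hfix : ∀ x, g x = x → x ≠ p → degN T x = 1)
    (hgℓ : g ℓ = ℓ) :
    ∃ g' : V → V, IsLeafExposedMatching T g' ∧ ∀ x, g x ≠ x → g' x = g x := by
  by_cases hp : g p = p
  · -- `ℓ` and `p` are both exposed, so the edge `ℓp` can be added
    have hℓp : T.Adj ℓ p := adj_of_neighborSet_eq_singleton hℓ
    have hg' : ∀ x, x ≠ ℓ → x ≠ p → (Equiv.swap ℓ p ∘ g) x = g x := fun x hxℓ hxp =>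
      Equiv.swap_apply_of_ne_of_ne (fun h => hxℓ (hg.injective (h.trans hgℓ.symm)))
        (fun h => hxp (hg.injective (h.trans hp.symm)))
    refine ⟨Equiv.swap ℓ p ∘ g, ⟨hg.swap_comp hgℓ hp, fun x hx => ?_, fun x hx => ?_⟩,
      fun x hx => hg' x (by rintro rfl; exact hx hgℓ) (by rintro rfl; exact hx hp)⟩
    · rcases eq_or_ne x ℓ with rfl | hxℓ
      · simpa [hgℓ] using hℓp
      rcases eq_or_ne x p with rfl | hxp
      · simpa [hp] using hℓp.symm
      rw [hg' x hxℓ hxp] at hx ⊢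
      exact hadj x hx
    · rcases eq_or_ne x ℓ with rfl | hxℓ
      · simp [hgℓ, hℓp.ne'] at hx
      rcases eq_or_ne x p with rfl | hxp
      · simp [hp, hℓp.ne] at hx
      exact hfix x ((hg' x hxℓ hxp).symm.trans hx) hxp
  · exact ⟨g, ⟨hg, hadj, fun x hx => hfix x hx (by rintro rfl; exact hp hx)⟩, fun _ _ => rfl⟩

lemma IsLeafExposedMatching.exists_of_induce_compl_singleton {ℓ p : V}
    (hℓ : T.neighborSet ℓ = {p})
    {f : ({ℓ}ᶜ : Set V) → ({ℓ}ᶜ : Set V)} (hf : IsLeafExposedMatching (T.induce {ℓ}ᶜ) f) :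
    ∃ g : V → V, IsLeafExposedMatching T g ∧ ∀ x, f x ≠ x → g x = f x := by
  classical
  obtain ⟨g₀, hinv, hadj, hfix, hg₀ℓ, hg₀f⟩ := hf.exists_extend_compl_singleton hℓ
  obtain ⟨g, hg, hgg₀⟩ := exists_isLeafExposedMatching_of_pendant hℓ hinv hadj hfix hg₀ℓ
  refine ⟨g, hg, fun x hx => ?_⟩
  have hx' : g₀ x ≠ x := by
    rw [hg₀f]
    exact fun h => hx (Subtype.ext h)
  rw [hgg₀ x hx', hg₀f]

end ExposedMatching

namespace SimpleGraph.IsTree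

variable {V : Type*} {T : SimpleGraph V}

theorem exists_isLeafExposedMatching_apply_eq [Finite V] (hT : T.IsTree) {u v : V}
    (huv : T.Adj u v) : ∃ f, IsLeafExposedMatching T f ∧ f u = v := by
  classical
  induction hn : Nat.card V generalizing V with
  | zero => exact (Finite.card_eq_zero_iff.mp hn).elim' u
  | succ n ih =>
    by_cases hV : Nat.card V ≤ 2
    · have huniv : ∀ x, x = u ∨ x = v := by
        have : ({u, v} : Set V) = Set.univ := Set.eq_of_subset_of_ncard_le (Set.subset_univ _)
          (by rw [Set.ncard_univ, Set.ncard_pair huv.ne]; exact hV)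
        intro x
        simpa [← this] using Set.mem_univ x
      refine ⟨Equiv.swap u v, ⟨Equiv.swap_apply_self u v, fun x hx => ?_, fun x hx => ?_⟩,
        Equiv.swap_apply_left u v⟩
      · rcases huniv x with rfl | rfl
        · simpa using huv
        · simpa using huv.symm
      · rcases huniv x with rfl | rfl <;> simp [huv.ne, huv.ne'] at hx
    obtain ⟨ℓ, hℓ, hℓu, hℓv⟩ := hT.exists_degN_eq_one_ne_ne (by omega) huv
    obtain ⟨p, hp⟩ := Set.ncard_eq_one.mp hℓ
    have hn' : Nat.card ({ℓ}ᶜ : Set V) = n := by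
      rw [Nat.card_coe_set_eq, Set.ncard_compl, Set.ncard_singleton, hn, Nat.add_sub_cancel]
    obtain ⟨f, hf, hfuv⟩ := ih (hT.induce_compl_singleton hp) (u := ⟨u, hℓu.symm⟩)
      (v := ⟨v, hℓv.symm⟩) huv hn'
    obtain ⟨g, hg, hgf⟩ := hf.exists_of_induce_compl_singleton hp
    refine ⟨g, hg, ?_⟩
    rw [hgf ⟨u, hℓu.symm⟩ (by rw [hfuv]; exact fun h => huv.ne' (congrArg Subtype.val h)), hfuv]

theorem exists_isLeafExposedMatching_apply_self [Finite V] (hT : T.IsTree) {u : V}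
    (hu : degN T u = 1) : ∃ f, IsLeafExposedMatching T f ∧ f u = u := by
  obtain ⟨v, hv⟩ := Set.ncard_eq_one.mp hu
  have huv : T.Adj u v := adj_of_neighborSet_eq_singleton hv
  by_cases hdv : degN T v = 1
  · have huniv := hT.connected.preconnected.eq_or_eq_of_neighborSet_eq_singleton hv
      (neighborSet_eq_singleton_of_degN_eq_one hdv huv.symm)
    refine ⟨id, ⟨fun _ => rfl, fun x hx => (hx rfl).elim, fun x _ => ?_⟩, rfl⟩
    rcases huniv x with rfl | rfl <;> assumption
  · obtain ⟨w, hvw, hwu⟩ := exists_adj_ne_of_degN_ne_one hdv huv.symm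
    obtain ⟨f, hf, hfv⟩ := hT.exists_isLeafExposedMatching_apply_eq hvw
    refine ⟨f, hf, by_contra fun hfu => hwu ?_⟩
    -- `u` can only be matched to its unique neighbour `v`, which is already matched to `w`
    have : f u = v := by
      rw [← Set.mem_singleton_iff, ← hv]
      exact hf.2.1 u hfu
    rw [← hfv, ← this, hf.1]

end SimpleGraph.IsTree

namespace SimpleGraph

variable {W : Type*} {G : SimpleGraph W}

lemma exists_isPerfectMatching_of_involutive {F : W → W} (hF : Function.Involutive F)
    (hadj : ∀ x, G.Adj x (F x)) :
    ∃ M : G.Subgraph, M.IsPerfectMatching ∧ ∀ x, s(x, F x) ∈ M.edgeSet := by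
  let M : G.Subgraph :=
    { verts := Set.univ
      Adj x y := F x = y
      adj_sub := by rintro x _ rfl; exact hadj x
      edge_vert _ := trivial
      symm := ⟨by rintro x _ rfl; exact hF x⟩ }
  exact ⟨M, Subgraph.isPerfectMatching_iff.mpr fun x => ⟨F x, rfl, fun _ h => Eq.symm h⟩,
    fun _ => rfl⟩

open Classical in
lemma Subgraph.IsPerfectMatching.even_card_filter_exists_adj_notMem [Fintype W]
    {M : G.Subgraph} (hM : M.IsPerfectMatching) {S : Finset W} (hS : Even #S) :
    Even #{x ∈ S | ∃ y ∉ S, M.Adj x y} := by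
  set I := {x ∈ S | ¬∃ y ∉ S, M.Adj x y}
  -- the vertices of `S` matched inside `S` are perfectly matched among themselves
  have hI : (M.induce I).IsMatching := by
    have hmem : ∀ {x y}, x ∈ I → M.Adj x y → y ∈ S := fun hx hxy =>
      by_contra fun hy => (mem_filter.mp hx).2 ⟨_, hy, hxy⟩
    intro x hx
    obtain ⟨y, hxy, huniq⟩ := hM.1 (hM.2 x)
    refine ⟨y, ⟨hx, ?_, hxy⟩, fun z hz => huniq z hz.2.2⟩
    refine mem_filter.mpr ⟨hmem hx hxy, fun ⟨z, hz, hyz⟩ => hz ?_⟩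
    exact hM.1.eq_of_adj_left hxy.symm hyz ▸ (mem_filter.mp hx).1
  have hIeven : Even #I := by simpa using hI.even_card
  rw [← card_filter_add_card_filter_not (fun x => ∃ y ∉ S, M.Adj x y)] at hS
  exact (Nat.even_add.mp hS).mpr hIeven

lemma not_matchingCovered_of_neighborSet_eq_singleton [Fintype W] {x y z : W}
    (hx : G.neighborSet x = {y}) (hyz : G.Adj y z) (hzx : z ≠ x) : ¬ MatchingCovered G := by
  rintro ⟨-, -, hpm⟩
  obtain ⟨M, hM, hyzM⟩ := hpm s(y, z) hyz
  obtain ⟨w, hxw, -⟩ := hM.1 (hM.2 x)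
  have hw : w = y := by
    rw [← Set.mem_singleton_iff, ← hx]
    exact M.adj_sub hxw
  exact hzx (hM.1.eq_of_adj_left hyzM (hw ▸ hxw.symm))

lemma not_matchingCovered_deleteEdges_of_even_cut [Fintype W] {S : Finset W} (hS : Even #S)
    {a b c d : W} (hcut : ∀ x ∈ S, ∀ y ∉ S, G.Adj x y → (x = a ∧ y = b) ∨ (x = c ∧ y = d))
    (hc : c ∈ S) (hd : d ∉ S) (hcd : G.Adj c d) (hne : s(c, d) ≠ s(a, b)) :
    ¬ MatchingCovered (G.deleteEdges {s(a, b)}) := by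
  classical
  rintro ⟨-, -, hpm⟩
  obtain ⟨M, hM, hcdM⟩ := hpm s(c, d) (deleteEdges_adj.mpr ⟨hcd, hne⟩)
  have hcross : {x ∈ S | ∃ y ∉ S, M.Adj x y} = {c} := by
    ext x
    simp only [mem_filter, mem_singleton]
    refine ⟨fun ⟨hx, y, hy, hxy⟩ => ?_, fun hx => hx ▸ ⟨hc, d, hd, hcdM⟩⟩
    obtain ⟨hxy, hab⟩ := deleteEdges_adj.mp (M.adj_sub hxy)
    rcases hcut x hx y hy hxy with ⟨rfl, rfl⟩ | ⟨rfl, -⟩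
    · exact (hab rfl).elim
    · rfl
  have := hM.even_card_filter_exists_adj_notMem hS
  rw [hcross, card_singleton] at this
  exact Nat.not_even_one this

end SimpleGraph

section LeafMatching

variable {V : Type*} {T : SimpleGraph V}

@[simp] lemma leafMatching_adj_inl_inl {a b : V} :
    (leafMatching T).Adj (.inl a) (.inl b) ↔ T.Adj a b := Iff.rfl

@[simp] lemma leafMatching_adj_inr_inr {a b : V} :
    (leafMatching T).Adj (.inr a) (.inr b) ↔ T.Adj a b := Iff.rfl

@[simp] lemma leafMatching_adj_inl_inr {a b : V} :
    (leafMatching T).Adj (.inl a) (.inr b) ↔ a = b ∧ degN T a = 1 := Iff.rfl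

@[simp] lemma leafMatching_adj_inr_inl {a b : V} :
    (leafMatching T).Adj (.inr a) (.inl b) ↔ a = b ∧ degN T b = 1 := Iff.rfl

def leafMatchingSwap (T : SimpleGraph V) : leafMatching T ≃g leafMatching T where
  toEquiv := Equiv.sumComm V V
  map_rel_iff' := by
    rintro (a | a) (b | b) <;> simp only [Equiv.sumComm_apply, Sum.swap_inl, Sum.swap_inr,
      leafMatching_adj_inl_inl, leafMatching_adj_inr_inr, leafMatching_adj_inl_inr,
      leafMatching_adj_inr_inl] <;> grind

lemma degN_leafMatching_inr (w : V) :
    degN (leafMatching T) (.inr w) = degN (leafMatching T) (.inl w) :=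
  (leafMatchingSwap T).degN_apply (.inl w)

lemma degN_leafMatching_inl_of_degN_eq_one {w : V} (hw : degN T w = 1) :
    degN (leafMatching T) (.inl w) = 2 := by
  obtain ⟨p, hp⟩ := Set.ncard_eq_one.mp hw
  have : (leafMatching T).neighborSet (.inl w) = {.inl p, .inr w} := by
    ext (y | y)
    · simp only [mem_neighborSet, leafMatching_adj_inl_inl, Set.mem_insert_iff,
        Set.mem_singleton_iff, Sum.inl.injEq, reduceCtorEq, or_false]
      rw [← mem_neighborSet, hp, Set.mem_singleton_iff]
    · simp [hw, eq_comm]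
  rw [degN, this, Set.ncard_pair Sum.inl_ne_inr]

lemma degN_leafMatching_inl_of_degN_ne_one {w : V} (hw : degN T w ≠ 1) :
    degN (leafMatching T) (.inl w) = degN T w := by
  have : (leafMatching T).neighborSet (.inl w) = Sum.inl '' T.neighborSet w := by
    ext (y | y) <;> simp [hw]
  rw [degN, this, Set.ncard_image_of_injective _ Sum.inl_injective, degN]

lemma ncard_setOf_degN_leafMatching_eq_two [Fintype V]
    (hdeg : ∀ v, degN T v = 1 ∨ degN T v = 3) :
    {x | degN (leafMatching T) x = 2}.ncard = 2 * #{v | degN T v = 1} := by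
  have hinl : ∀ w, degN (leafMatching T) (.inl w) = 2 ↔ degN T w = 1 := fun w => by
    rcases hdeg w with hw | hw
    · simp [hw, degN_leafMatching_inl_of_degN_eq_one]
    · simp [hw, degN_leafMatching_inl_of_degN_ne_one]
  have : {x | degN (leafMatching T) x = 2} =
      ↑((({v | degN T v = 1} : Finset V)).disjSum {v | degN T v = 1}) := by
    ext (w | w) <;> simp [degN_leafMatching_inr, hinl]
  rw [this, Set.ncard_coe_finset, card_disjSum, two_mul]

lemma leafMatching_colorable_two (hT : T.Colorable 2) : (leafMatching T).Colorable 2 := by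
  obtain ⟨C⟩ := hT
  have hrev : ∀ i : Fin 2, i.rev ≠ i := by decide
  refine ⟨Coloring.mk (Sum.elim C (Fin.rev ∘ C)) ?_⟩
  rintro (a | a) (b | b) hab
  · exact C.valid hab
  · obtain ⟨rfl, -⟩ := hab
    exact (hrev _).symm
  · obtain ⟨rfl, -⟩ := hab
    exact hrev _
  · exact Fin.rev_injective.ne (C.valid hab)

lemma leafMatching_connected (hT : T.Connected) {ℓ : V} (hℓ : degN T ℓ = 1) :
    (leafMatching T).Connected := by
  let ι₁ : T →g leafMatching T := ⟨Sum.inl, id⟩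
  let ι₂ : T →g leafMatching T := ⟨Sum.inr, id⟩
  have h : ∀ x, (leafMatching T).Reachable (.inl ℓ) x := by
    rintro (a | a)
    · exact (hT.preconnected ℓ a).map ι₁
    · have hℓℓ : (leafMatching T).Adj (.inl ℓ) (.inr ℓ) := ⟨rfl, hℓ⟩
      exact hℓℓ.reachable.trans ((hT.preconnected ℓ a).map ι₂)
  exact (connected_iff _).mpr ⟨fun x y => (h x).symm.trans (h y), ⟨.inl ℓ⟩⟩

end LeafMatching

section LiftMatching

variable {V : Type*} {T : SimpleGraph V} [DecidableEq V] {f : V → V}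

/-- The perfect matching of `leafMatching T` that uses `f` in both copies and joins each exposed
leaf to its twin. -/
def liftMatching (f : V → V) (x : V ⊕ V) : V ⊕ V :=
  if Sum.map f f x = x then x.swap else Sum.map f f x

lemma liftMatching_involutive (hf : Function.Involutive f) :
    Function.Involutive (liftMatching f) := by
  rintro (a | a) <;> by_cases ha : f a = a <;> simp [liftMatching, ha, hf a, eq_comm (a := a)]

lemma leafMatching_adj_liftMatching (hf : IsLeafExposedMatching T f) (x : V ⊕ V) :
    (leafMatching T).Adj x (liftMatching f x) := by
  rcases x with a | a <;> by_cases ha : f a = a <;> simp [liftMatching, ha, hf.2.2 a, hf.2.1 a]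

lemma exists_liftMatching_apply_eq [Finite V] (hT : T.IsTree) {x y : V ⊕ V}
    (hxy : (leafMatching T).Adj x y) :
    ∃ f, IsLeafExposedMatching T f ∧ liftMatching f x = y := by
  rcases x with a | a <;> rcases y with b | b
  · obtain ⟨f, hf, hfab⟩ := hT.exists_isLeafExposedMatching_apply_eq hxy
    exact ⟨f, hf, by simp [liftMatching, hfab, hxy.ne']⟩
  · obtain ⟨rfl, ha⟩ := hxy
    obtain ⟨f, hf, hfa⟩ := hT.exists_isLeafExposedMatching_apply_self ha
    exact ⟨f, hf, by simp [liftMatching, hfa]⟩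
  · obtain ⟨rfl, ha⟩ := hxy
    obtain ⟨f, hf, hfa⟩ := hT.exists_isLeafExposedMatching_apply_self ha
    exact ⟨f, hf, by simp [liftMatching, hfa]⟩
  · obtain ⟨f, hf, hfab⟩ := hT.exists_isLeafExposedMatching_apply_eq hxy
    exact ⟨f, hf, by simp [liftMatching, hfab, hxy.ne']⟩

end LiftMatching

section MatchingCovered

variable {V : Type*} {T : SimpleGraph V}

lemma leafMatching_matchingCovered [Fintype V] (hT : T.IsTree) (hV : 2 ≤ Fintype.card V) :
    MatchingCovered (leafMatching T) := by
  classical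
  have : Nontrivial V := Fintype.one_lt_card_iff_nontrivial.mp hV
  obtain ⟨ℓ, -, -, hℓ, -⟩ := hT.exists_ne_and_degN_eq_one
  refine ⟨leafMatching_connected hT.connected hℓ, by rw [Fintype.card_sum]; omega, fun e he => ?_⟩
  induction e using Sym2.ind with | _ x y => ?_
  obtain ⟨f, hf, hfxy⟩ := exists_liftMatching_apply_eq (x := x) (y := y) hT he
  obtain ⟨M, hM, hMf⟩ := exists_isPerfectMatching_of_involutive (liftMatching_involutive hf.1)
    (leafMatching_adj_liftMatching hf)
  exact ⟨M, hM, hfxy ▸ hMf x⟩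

lemma leafMatching_not_matchingCovered_deleteEdges_inl_inr [Fintype V] {u : V}
    (hu : degN T u = 1) : ¬ MatchingCovered ((leafMatching T).deleteEdges {s(.inl u, .inr u)}) := by
  obtain ⟨v, hv⟩ := Set.ncard_eq_one.mp hu
  have huv : T.Adj u v := adj_of_neighborSet_eq_singleton hv
  -- without its edge to `inr u`, the vertex `inl u` is pendant at `inl v`
  have hN : ((leafMatching T).deleteEdges {s(.inl u, .inr u)}).neighborSet (.inl u) =
      {.inl v} := by
    ext (y | y)
    · rw [mem_neighborSet, deleteEdges_adj, leafMatching_adj_inl_inl, ← mem_neighborSet, hv]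
      simp
    · simp +contextual
  obtain ⟨z, hvz, hzu⟩ : ∃ z, ((leafMatching T).deleteEdges {s(.inl u, .inr u)}).Adj (.inl v) z ∧
      z ≠ .inl u := by
    by_cases hdv : degN T v = 1
    · exact ⟨.inr v, deleteEdges_adj.mpr ⟨⟨rfl, hdv⟩, by simp [huv.ne']⟩, Sum.inr_ne_inl⟩
    · obtain ⟨w, hvw, hwu⟩ := exists_adj_ne_of_degN_ne_one hdv huv.symm
      exact ⟨.inl w, deleteEdges_adj.mpr ⟨hvw, by simp⟩, by simpa using hwu⟩
  exact not_matchingCovered_of_neighborSet_eq_singleton hN hvz hzu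

lemma leafMatching_adj_cut {W : Finset V} {a b : V}
    (hW : ∀ x ∈ W, ∀ y ∉ W, T.Adj x y → x = a ∧ y = b) :
    ∀ x ∈ W.disjSum W, ∀ y ∉ W.disjSum W, (leafMatching T).Adj x y →
      (x = .inl a ∧ y = .inl b) ∨ (x = .inr a ∧ y = .inr b) := by
  rintro (x | x) hx (y | y) hy hxy <;>
    simp only [inl_mem_disjSum, inr_mem_disjSum] at hx hy
  · obtain ⟨rfl, rfl⟩ := hW x hx y hy hxy
    exact .inl ⟨rfl, rfl⟩
  · exact absurd (hxy.1 ▸ hx) hy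
  · exact absurd (hxy.1 ▸ hx) hy
  · obtain ⟨rfl, rfl⟩ := hW x hx y hy hxy
    exact .inr ⟨rfl, rfl⟩

lemma leafMatching_not_matchingCovered_deleteEdges_copy [Fintype V] (hT : T.IsAcyclic) {a b : V}
    (hab : T.Adj a b) :
    ¬ MatchingCovered ((leafMatching T).deleteEdges {s(.inl a, .inl b)}) ∧
      ¬ MatchingCovered ((leafMatching T).deleteEdges {s(.inr a, .inr b)}) := by
  classical
  -- the only edges leaving the two copies of the side of `a` in `T - ab` are the copies of `ab`
  have hbr : T.IsBridge s(a, b) := isAcyclic_iff_forall_adj_isBridge.mp hT hab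
  let W : Finset V := {x | (T.deleteEdges {s(a, b)}).Reachable a x}
  have ha : a ∈ W := by simp [W]
  have hb : b ∉ W := by simpa [W] using isBridge_iff.mp hbr
  have hcut := leafMatching_adj_cut (T := T) (W := W) fun x hx y hy =>
    hbr.eq_and_eq_of_adj (by simpa [W] using hx) (by simpa [W] using hy)
  have hS : Even #(W.disjSum W) := by simp [card_disjSum]
  exact ⟨not_matchingCovered_deleteEdges_of_even_cut hS hcut (inr_mem_disjSum.mpr ha)
      (by simpa using hb) hab (by simp),
    not_matchingCovered_deleteEdges_of_even_cut hS (fun x hx y hy hxy => (hcut x hx y hy hxy).symm)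
      (inl_mem_disjSum.mpr ha) (by simpa using hb) hab (by simp)⟩

lemma leafMatching_not_matchingCovered_deleteEdges [Fintype V] (hT : T.IsAcyclic)
    {e : Sym2 (V ⊕ V)} (he : e ∈ (leafMatching T).edgeSet) :
    ¬ MatchingCovered ((leafMatching T).deleteEdges {e}) := by
  induction e using Sym2.ind with | _ x y => ?_
  rcases x with a | a <;> rcases y with b | b
  · exact (leafMatching_not_matchingCovered_deleteEdges_copy hT he).1
  · obtain ⟨rfl, ha⟩ := he
    exact leafMatching_not_matchingCovered_deleteEdges_inl_inr ha
  · obtain ⟨rfl, ha⟩ := he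
    rw [Sym2.eq_swap]
    exact leafMatching_not_matchingCovered_deleteEdges_inl_inr ha
  · exact (leafMatching_not_matchingCovered_deleteEdges_copy hT he).2

end MatchingCovered

/-- The graph obtained from a cubic Halin tree (a nontrivial finite tree all of whose vertices
have degree 1 or 3) by isomorphic leaf matching is a minimal bipartite matching covered graph
with `|V₂| = n/2 + 2`. -/
theorem stmt7 {V : Type*} [Fintype V] (T : SimpleGraph V)
    (hT : T.IsTree) (hcard : 2 ≤ Fintype.card V)
    (hdeg : ∀ v, degN T v = 1 ∨ degN T v = 3) :
    (leafMatching T).Colorable 2 ∧ MinimalMatchingCovered (leafMatching T) ∧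
      2 * {x | degN (leafMatching T) x = 2}.ncard = Fintype.card (V ⊕ V) + 4 := by
  refine ⟨leafMatching_colorable_two hT.colorable_two, ⟨leafMatching_matchingCovered hT hcard,
    fun e he => leafMatching_not_matchingCovered_deleteEdges hT.isAcyclic he⟩, ?_⟩
  rw [ncard_setOf_degN_leafMatching_eq_two hdeg, Fintype.card_sum]
  have := hT.two_mul_card_leaves hdeg
  omega
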